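/- arXiv:math/0203111 — 2 statements merged into one kernel-verified Lean document; each statement's English description precedes it below -/
import Mathlib

section
/- For every integer m ≥ 0, Q_m(q) = q^{m+1}(Q_{−2−m}(q) + 1), where Q_m(q) is the generating function for partitions with rank ≥ m. -/
namespace Dyson

/-- The rank of a partition: largest part minus number of parts. -/
def rank {n : ℕ} (π : n.Partition) : ℤ :=
  (π.parts.sup : ℤ) - π.parts.card

/-- The Euler product `(q;q)_∞`. -/
noncomputable def euler (q : ℝ) : ℝ := ∏' j : ℕ, (1 - q ^ (j + 1))

/-- `Q_m(q)`: generating function for nonempty partitions of rank ≥ m. -/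
noncomputable def Q (q : ℝ) (m : ℤ) : ℝ :=
  ∑' n : ℕ, (Nat.card {π : (n + 1).Partition // m ≤ rank π} : ℝ) * q ^ (n + 1)

noncomputable def qPoch (q : ℝ) (n : ℕ) : ℝ := ∏ j ∈ Finset.range n, (1 - q ^ (j + 1))

noncomputable def qbinom (q : ℝ) (a b : ℤ) : ℝ :=
  if 0 ≤ b ∧ b ≤ a then qPoch q a.toNat / (qPoch q b.toNat * qPoch q (a - b).toNat) else 0

noncomputable def QL (q : ℝ) (m L : ℤ) : ℝ :=
  ∑' n : ℕ,
    (Nat.card {π : (n + 1).Partition // m ≤ rank π ∧ (π.parts.sup : ℤ) ≤ L} : ℝ) * q ^ (n + 1)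

def partAt {n : ℕ} (π : n.Partition) (j : ℕ) : ℕ :=
  ((π.parts.sort (· ≤ ·)).reverse.getD j 0)

def inRankSet {n : ℕ} (π : n.Partition) (k : ℤ) : Prop :=
  ∃ j : ℕ, (j : ℤ) - partAt π (j + 1) = k

noncomputable def G (q : ℝ) (k : ℤ) : ℝ :=
  ∑' n : ℕ, (Nat.card {π : n.Partition // inRankSet π k} : ℝ) * q ^ n

def crank {n : ℕ} (π : n.Partition) : ℤ :=
  if π.parts.count 1 = 0 then (π.parts.sup : ℤ)
  else ((π.parts.filter (fun p => π.parts.count 1 < p)).card : ℤ) - π.parts.count 1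


end Dyson

/-!
Dyson's adjoint removes the largest part `a` of a partition `π`, conjugates what is left, and
adjoins `a - m - 1` as the new largest part. The conjugate of `π` minus `a` has at most `a` parts
and largest part `#π - 1`, so when `rank π ≥ m` the new part is indeed the largest one, the result
has rank `≥ -2 - m`, and it is a partition of `|π| - m - 1`. Since conjugation is an involution,
the same construction with new part `b + m + 1`, where `b` is the largest part, inverts the map. The map needs a new part `a - m - 1 > 0`, which
fails only for the one-part partition `(m + 1)`: it is the single partition of `n ≤ m + 1` with
rank `≥ m` and accounts for the term `q ^ (m + 1)`.

Both series converge for `|q| < 1` since `p(n) tⁿ ≤ ∏ₖ (1 - tᵏ)⁻¹ ≤ exp (t / (1 - t)²)`.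
-/

namespace Finset

theorem lt_card_filter_range_iff {P : ℕ → Prop} [DecidablePred P] {N : ℕ} (hP : Antitone P)
    (hN : ∀ j, P j → j < N) (j : ℕ) : j < ((range N).filter P).card ↔ P j := by
  induction N with
  | zero => simpa using fun h => Nat.not_lt_zero j (hN j h)
  | succ N ih =>
    by_cases hPN : P N
    · rw [filter_true_of_mem fun i hi => hP (Nat.lt_succ_iff.1 (mem_range.1 hi)) hPN,
        card_range]
      exact ⟨fun h => hP (Nat.lt_succ_iff.1 h) hPN, hN j⟩
    · rw [range_add_one, filter_insert, if_neg hPN]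
      refine ih fun i hi => lt_of_le_of_ne (Nat.lt_succ_iff.1 (hN i hi)) ?_
      rintro rfl
      exact hPN hi

end Finset

namespace Multiset

theorem sup_mem_of_ne_zero {α : Type*} [LinearOrder α] [OrderBot α] {s : Multiset α}
    (hs : s ≠ 0) : s.sup ∈ s := by
  induction s using Multiset.induction_on with
  | empty => contradiction
  | cons a t ih =>
    rw [sup_cons]
    rcases eq_or_ne t 0 with rfl | ht
    · simp
    rcases max_choice a t.sup with h | h <;> rw [h]
    · exact mem_cons_self a t
    · exact mem_cons_of_mem (ih ht)

variable (s : Multiset ℕ)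

theorem antitone_countP_lt : Antitone fun a => s.countP (a < ·) := fun a b hab => by
  simp only [countP_eq_card_filter]
  exact card_le_card (monotone_filter_right s fun x h => hab.trans_lt h)

theorem countP_le_eq_count_add_countP_lt (v : ℕ) :
    s.countP (v ≤ ·) = s.count v + s.countP (v < ·) := by
  induction s using Multiset.induction_on with
  | empty => simp
  | cons a t ih =>
    simp only [countP_cons, count_cons, ih]
    split_ifs <;> omega

theorem eq_of_countP_lt_eq {s t : Multiset ℕ} (hs : 0 ∉ s) (ht : 0 ∉ t)
    (h : ∀ i, s.countP (i < ·) = t.countP (i < ·)) : s = t := by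
  ext v
  rcases v with _ | v
  · rw [count_eq_zero_of_notMem hs, count_eq_zero_of_notMem ht]
  · have hs' := countP_le_eq_count_add_countP_lt s (v + 1)
    have ht' := countP_le_eq_count_add_countP_lt t (v + 1)
    simp only [Nat.add_one_le_iff] at hs' ht'
    rw [h, h] at hs'
    omega

theorem sum_range_countP_lt {N : ℕ} (hN : s.sup ≤ N) :
    ∑ j ∈ Finset.range N, s.countP (j < ·) = s.sum := by
  induction s using Multiset.induction_on with
  | empty => simp
  | cons a t ih =>
    rw [sup_cons, sup_le_iff] at hN
    simp only [countP_cons, Finset.sum_add_distrib, ih hN.2, sum_cons, Finset.sum_boole]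
    have : (Finset.range N).filter (· < a) = Finset.range a := by
      ext j
      simp only [Finset.mem_filter, Finset.mem_range]
      omega
    rw [this, Finset.card_range, Nat.cast_id, add_comm]

end Multiset

open Multiset

namespace Dyson

def conj (s : Multiset ℕ) : Multiset ℕ :=
  (range s.sup).map fun j => s.countP (j < ·)

@[simp] lemma card_conj (s : Multiset ℕ) : card (conj s) = s.sup := by simp [conj]

lemma zero_notMem_conj (s : Multiset ℕ) : 0 ∉ conj s := by
  simp only [conj, mem_map, mem_range, not_exists, not_and]
  intro j hj h
  have hs : s ≠ 0 := by rintro rfl; simp at hj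
  exact (countP_pos.2 ⟨s.sup, sup_mem_of_ne_zero hs, hj⟩).ne' h

lemma lt_countP_conj_iff (s : Multiset ℕ) (i j : ℕ) :
    j < (conj s).countP (i < ·) ↔ i < s.countP (j < ·) := by
  rw [conj, countP_map, ← Finset.range_val, ← Finset.filter_val, Finset.card_val]
  refine Finset.lt_card_filter_range_iff (fun a b hab h => h.trans_le (antitone_countP_lt s hab))
    (fun a h => ?_) j
  obtain ⟨p, hp, hap⟩ := countP_pos.1 (i.zero_le.trans_lt h)
  exact hap.trans_le (le_sup hp)

lemma conj_conj {s : Multiset ℕ} (hs : 0 ∉ s) : conj (conj s) = s :=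
  eq_of_countP_lt_eq (zero_notMem_conj _) hs fun i =>
    eq_of_forall_lt_iff fun j => by rw [lt_countP_conj_iff, lt_countP_conj_iff]

lemma sup_conj {s : Multiset ℕ} (hs : 0 ∉ s) : (conj s).sup = card s := by
  rw [← card_conj, conj_conj hs]

lemma sum_conj (s : Multiset ℕ) : (conj s).sum = s.sum := by
  rw [conj, ← Finset.range_val]
  exact sum_range_countP_lt s le_rfl

def adjoint (c : ℕ) (s : Multiset ℕ) : Multiset ℕ :=
  c ::ₘ conj (s.erase s.sup)

lemma zero_notMem_adjoint {c : ℕ} (hc : c ≠ 0) (s : Multiset ℕ) : 0 ∉ adjoint c s := by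
  simp only [adjoint, mem_cons, not_or]
  exact ⟨hc.symm, zero_notMem_conj _⟩

lemma card_adjoint (c : ℕ) (s : Multiset ℕ) : card (adjoint c s) = (s.erase s.sup).sup + 1 := by
  simp [adjoint]

lemma sum_adjoint (c : ℕ) {s : Multiset ℕ} (hs : s ≠ 0) :
    (adjoint c s).sum + s.sup = c + s.sum := by
  rw [adjoint, sum_cons, sum_conj, ← sum_erase (sup_mem_of_ne_zero hs)]
  ring

lemma sup_adjoint {c : ℕ} {s : Multiset ℕ} (hs : s ≠ 0) (hs0 : 0 ∉ s) (hc : card s ≤ c + 1) :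
    (adjoint c s).sup = c := by
  have hcard := card_erase_add_one (sup_mem_of_ne_zero hs)
  rw [adjoint, sup_cons, sup_conj fun h => hs0 (mem_of_mem_erase h)]
  exact max_eq_left (by omega)

lemma adjoint_adjoint {c : ℕ} {s : Multiset ℕ} (hs : s ≠ 0) (hs0 : 0 ∉ s)
    (hc : card s ≤ c + 1) : adjoint s.sup (adjoint c s) = s := by
  rw [adjoint, sup_adjoint hs hs0 hc, adjoint, erase_cons_head,
    conj_conj fun h => hs0 (mem_of_mem_erase h), cons_erase (sup_mem_of_ne_zero hs)]

lemma sup_erase_sup_le (s : Multiset ℕ) : (s.erase s.sup).sup ≤ s.sup :=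
  sup_mono (erase_subset _ _)

lemma parts_ne_zero {n : ℕ} (π : (n + 1).Partition) : π.parts ≠ 0 := by
  intro h
  simpa [h] using π.parts_sum

lemma zero_notMem_parts {n : ℕ} (π : n.Partition) : 0 ∉ π.parts :=
  fun h => (π.parts_pos h).ne' rfl

lemma parts_sup_le {n : ℕ} (π : n.Partition) : π.parts.sup ≤ n :=
  Multiset.sup_le.2 fun _ => Nat.Partition.le_of_mem_parts

lemma le_card_parts_mul_sup {n : ℕ} (π : n.Partition) : n ≤ card π.parts * π.parts.sup := by
  simpa [π.parts_sum] using sum_le_card_nsmul π.parts _ fun _ => le_sup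

lemma le_rank_iff {n : ℕ} (π : n.Partition) (a : ℤ) :
    a ≤ rank π ↔ a + card π.parts ≤ π.parts.sup := by
  rw [rank]
  omega

lemma rank_le {n : ℕ} (π : (n + 1).Partition) : rank π ≤ n := by
  have := parts_sup_le π
  have := card_pos.2 (parts_ne_zero π)
  rw [rank]
  omega

lemma parts_eq_singleton_of_le_rank {n : ℕ} (π : (n + 1).Partition) (h : n ≤ rank π) :
    π.parts = {n + 1} := by
  have := parts_sup_le π
  have := card_pos.2 (parts_ne_zero π)
  have := (le_rank_iff π n).1 h
  obtain ⟨x, hx⟩ := card_eq_one.1 (by omega : card π.parts = 1)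
  simpa [hx] using π.parts_sum

lemma add_two_le_sup_of_le_rank {k m : ℕ} {π : (k + m + 1 + 1).Partition}
    (h : (m : ℤ) ≤ rank π) : m + 2 ≤ π.parts.sup := by
  have := le_card_parts_mul_sup π
  have := card_pos.2 (parts_ne_zero π)
  have := (le_rank_iff π m).1 h
  nlinarith

def adjointPartition {n n' : ℕ} (c : ℕ) (hc : c ≠ 0) (π : (n + 1).Partition)
    (h : n' + π.parts.sup = c + (n + 1)) : n'.Partition where
  parts := adjoint c π.parts
  parts_pos hi := Nat.pos_of_ne_zero (ne_of_mem_of_not_mem hi (zero_notMem_adjoint hc _))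
  parts_sum := by
    have := sum_adjoint c (parts_ne_zero π)
    rw [π.parts_sum] at this
    omega

lemma rank_adjointPartition {n n' : ℕ} (c : ℕ) (hc : c ≠ 0) (π : (n + 1).Partition)
    (h : n' + π.parts.sup = c + (n + 1)) (hcard : card π.parts ≤ c + 1) :
    (c : ℤ) - 1 - π.parts.sup ≤ rank (adjointPartition c hc π h) := by
  have := sup_erase_sup_le π.parts
  simp only [rank, adjointPartition, card_adjoint,
    sup_adjoint (parts_ne_zero π) (zero_notMem_parts π) hcard]
  omega

def rankShiftEquiv (m k : ℕ) :
    {π : (k + m + 1 + 1).Partition // (m : ℤ) ≤ rank π} ≃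
      {σ : (k + 1).Partition // -2 - (m : ℤ) ≤ rank σ} where
  toFun π :=
    have := add_two_le_sup_of_le_rank π.2
    have := (le_rank_iff π.1 m).1 π.2
    ⟨adjointPartition (π.1.parts.sup - (m + 1)) (by omega) π.1 (by omega),
      le_trans (by push_cast [Nat.cast_sub (by omega : m + 1 ≤ π.1.parts.sup)]; omega)
        (rank_adjointPartition _ _ _ _ (by omega))⟩
  invFun σ :=
    have := (le_rank_iff σ.1 _).1 σ.2
    ⟨adjointPartition (σ.1.parts.sup + (m + 1)) (by omega) σ.1 (by omega),
      le_trans (by push_cast; omega) (rank_adjointPartition _ _ _ _ (by omega))⟩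
  left_inv π := by
    have := add_two_le_sup_of_le_rank π.2
    have := (le_rank_iff π.1 m).1 π.2
    refine Subtype.ext (Nat.Partition.ext ?_)
    dsimp only [adjointPartition]
    rw [sup_adjoint (parts_ne_zero _) (zero_notMem_parts _) (by omega),
      Nat.sub_add_cancel (by omega),
      adjoint_adjoint (parts_ne_zero _) (zero_notMem_parts _) (by omega)]
  right_inv σ := by
    have := (le_rank_iff σ.1 _).1 σ.2
    refine Subtype.ext (Nat.Partition.ext ?_)
    dsimp only [adjointPartition]
    rw [sup_adjoint (parts_ne_zero _) (zero_notMem_parts _) (by omega), Nat.add_sub_cancel,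
      adjoint_adjoint (parts_ne_zero _) (zero_notMem_parts _) (by omega)]

lemma sum_succ_mul_count_parts {n : ℕ} (π : n.Partition) :
    ∑ i : Fin n, ((i : ℕ) + 1) * π.parts.count ((i : ℕ) + 1) = n := by
  have hsub : π.parts.toFinset ⊆ Finset.range (n + 1) := fun a ha =>
    Finset.mem_range_succ_iff.2 (Nat.Partition.le_of_mem_parts (Multiset.mem_toFinset.1 ha))
  conv_rhs => rw [← π.parts_sum, Finset.sum_multiset_count_of_subset _ _ hsub,
    Finset.sum_range_succ', smul_zero, add_zero]
  rw [Fin.sum_univ_eq_sum_range (fun i => (i + 1) * π.parts.count (i + 1))]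
  simp only [smul_eq_mul, mul_comm]

lemma eq_of_count_succ_eq {n : ℕ} {π ρ : n.Partition}
    (h : ∀ i : Fin n, π.parts.count ((i : ℕ) + 1) = ρ.parts.count ((i : ℕ) + 1)) : π = ρ := by
  refine Nat.Partition.ext (Multiset.ext.2 fun a => ?_)
  have hzero (σ : n.Partition) (ha : a = 0 ∨ n < a) : σ.parts.count a = 0 :=
    Multiset.count_eq_zero.2 fun hmem => by
      have := σ.parts_pos hmem
      have := Nat.Partition.le_of_mem_parts hmem
      omega
  by_cases ha : a = 0 ∨ n < a
  · rw [hzero π ha, hzero ρ ha]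
  · obtain ⟨i, rfl⟩ : ∃ i : Fin n, (i : ℕ) + 1 = a := ⟨⟨a - 1, by omega⟩, by simp; omega⟩
    exact h i

lemma card_partition_mul_pow_le_prod {t : ℝ} (ht : 0 ≤ t) (n : ℕ) :
    (Fintype.card n.Partition : ℝ) * t ^ n ≤
      ∏ i : Fin n, ∑ j ∈ Finset.range (n + 1), (t ^ ((i : ℕ) + 1)) ^ j := by
  classical
  -- a partition is determined by its multiplicities, and the generating sum over all
  -- multiplicity vectors factors into geometric sums
  let mult : n.Partition → Fin n → ℕ := fun π i => π.parts.count ((i : ℕ) + 1)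
  have hweight (π : n.Partition) : ∏ i : Fin n, (t ^ ((i : ℕ) + 1)) ^ mult π i = t ^ n := by
    simp_rw [← pow_mul, Finset.prod_pow_eq_pow_sum, mult, sum_succ_mul_count_parts]
  have hmult (π : n.Partition) (i : Fin n) : mult π i ≤ n :=
    calc mult π i ≤ ((i : ℕ) + 1) * mult π i := Nat.le_mul_of_pos_left _ i.succ_pos
      _ ≤ ∑ i : Fin n, ((i : ℕ) + 1) * mult π i :=
        Finset.single_le_sum (f := fun i : Fin n => ((i : ℕ) + 1) * mult π i)
          (fun _ _ => Nat.zero_le _) (Finset.mem_univ i)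
      _ = n := sum_succ_mul_count_parts π
  calc (Fintype.card n.Partition : ℝ) * t ^ n
      = ∑ π : n.Partition, ∏ i : Fin n, (t ^ ((i : ℕ) + 1)) ^ mult π i := by
        simp only [hweight, Finset.sum_const, Finset.card_univ, nsmul_eq_mul]
    _ = ∑ f ∈ Finset.univ.image mult, ∏ i : Fin n, (t ^ ((i : ℕ) + 1)) ^ f i := by
        rw [Finset.sum_image fun π _ ρ _ h => eq_of_count_succ_eq (congrFun h)]
    _ ≤ ∑ f ∈ Fintype.piFinset fun _ => Finset.range (n + 1),
          ∏ i : Fin n, (t ^ ((i : ℕ) + 1)) ^ f i := by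
        refine Finset.sum_le_sum_of_subset_of_nonneg ?_ fun _ _ _ => by positivity
        intro f hf
        obtain ⟨π, -, rfl⟩ := Finset.mem_image.1 hf
        simpa only [Fintype.mem_piFinset, Finset.mem_range, Nat.lt_succ_iff] using hmult π
    _ = _ := (Finset.prod_univ_sum _ _).symm

lemma geom_sum_le_exp {t x : ℝ} (hx : 0 ≤ x) (hxt : x ≤ t) (ht : t < 1) (N : ℕ) :
    ∑ j ∈ Finset.range N, x ^ j ≤ Real.exp (x / (1 - t)) := by
  have hx1 : 0 < 1 - x := by linarith
  calc ∑ j ∈ Finset.range N, x ^ j ≤ 1 / (1 - x) := by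
        simpa using geom_sum_Ico_le_of_lt_one (m := 0) (n := N) hx (hxt.trans_lt ht)
    _ = x / (1 - x) + 1 := by field_simp; ring
    _ ≤ x / (1 - t) + 1 := by gcongr
    _ ≤ Real.exp (x / (1 - t)) := Real.add_one_le_exp _

lemma card_partition_mul_pow_le {t : ℝ} (ht0 : 0 ≤ t) (ht1 : t < 1) (n : ℕ) :
    (Fintype.card n.Partition : ℝ) * t ^ n ≤ Real.exp (t / (1 - t) ^ 2) := by
  have ht : 0 < 1 - t := by linarith
  refine (card_partition_mul_pow_le_prod ht0 n).trans ?_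
  calc ∏ i : Fin n, ∑ j ∈ Finset.range (n + 1), (t ^ ((i : ℕ) + 1)) ^ j
      ≤ ∏ i : Fin n, Real.exp (t ^ ((i : ℕ) + 1) / (1 - t)) :=
        Finset.prod_le_prod (fun _ _ => by positivity) fun i _ =>
          geom_sum_le_exp (by positivity) (pow_le_of_le_one ht0 ht1.le (by omega)) ht1 _
    _ = Real.exp ((∑ i ∈ Finset.Ico 1 (n + 1), t ^ i) / (1 - t)) := by
        rw [← Real.exp_sum, Fin.sum_univ_eq_sum_range (fun i => t ^ (i + 1) / (1 - t)),
          ← Finset.sum_div, Finset.sum_Ico_eq_sum_range, Nat.add_sub_cancel]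
        simp only [add_comm 1]
    _ ≤ Real.exp (t / (1 - t) / (1 - t)) := by
        gcongr
        simpa using geom_sum_Ico_le_of_lt_one (m := 1) (n := n + 1) ht0 ht1
    _ = Real.exp (t / (1 - t) ^ 2) := by rw [div_div, sq]

theorem summable_card_partition_mul_pow {q : ℝ} (hq : |q| < 1) :
    Summable fun n => (Fintype.card n.Partition : ℝ) * q ^ n := by
  -- `|q|ⁿ = tⁿ tⁿ`: one factor is absorbed by `card_partition_mul_pow_le`, the other is geometric
  set t := Real.sqrt |q|
  have ht0 : 0 ≤ t := Real.sqrt_nonneg _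
  have ht1 : t < 1 := by rwa [Real.sqrt_lt' one_pos, one_pow]
  refine Summable.of_norm_bounded ((summable_geometric_of_lt_one ht0 ht1).mul_left
    (Real.exp (t / (1 - t) ^ 2))) fun n => ?_
  have hq : ‖q‖ = t * t := (Real.mul_self_sqrt (abs_nonneg q)).symm
  rw [norm_mul, norm_pow, hq, mul_pow, ← mul_assoc, Real.norm_natCast]
  exact mul_le_mul_of_nonneg_right (card_partition_mul_pow_le ht0 ht1 n) (by positivity)

lemma summable_Q_terms {q : ℝ} (hq : |q| < 1) (m : ℤ) :
    Summable fun n : ℕ => (Nat.card {π : (n + 1).Partition // m ≤ rank π} : ℝ) * q ^ (n + 1) := by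
  refine Summable.of_norm_bounded
    ((summable_nat_add_iff 1).2 (summable_card_partition_mul_pow hq)).norm fun n => ?_
  rw [norm_mul, norm_mul, Real.norm_natCast, Real.norm_natCast, ← Nat.card_eq_fintype_card]
  gcongr
  exact Finite.card_subtype_le _

lemma card_rank_ge_eq_zero_of_lt {m n : ℕ} (h : n < m) :
    Nat.card {π : (n + 1).Partition // (m : ℤ) ≤ rank π} = 0 :=
  have : IsEmpty {π : (n + 1).Partition // (m : ℤ) ≤ rank π} :=
    ⟨fun π => by have := rank_le π.1; have := π.2; omega⟩
  Nat.card_of_isEmpty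

lemma card_rank_ge_self (m : ℕ) : Nat.card {π : (m + 1).Partition // (m : ℤ) ≤ rank π} = 1 := by
  have hparts := Nat.Partition.indiscrete_parts m.succ_ne_zero
  refine Nat.card_eq_one_iff_exists.2 ⟨⟨.indiscrete (m + 1), by simp [rank]⟩, fun π => ?_⟩
  exact Subtype.ext (Nat.Partition.ext (by rw [hparts, parts_eq_singleton_of_le_rank π.1 π.2]))

lemma sum_range_card_rank_ge (q : ℝ) (m : ℕ) :
    ∑ i ∈ Finset.range (m + 1),
      (Nat.card {π : (i + 1).Partition // (m : ℤ) ≤ rank π} : ℝ) * q ^ (i + 1) = q ^ (m + 1) := by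
  rw [Finset.sum_range_succ, card_rank_ge_self, Finset.sum_eq_zero fun i hi => by
    rw [card_rank_ge_eq_zero_of_lt (Finset.mem_range.1 hi), Nat.cast_zero, zero_mul]]
  simp

/-- for m ≥ 0, `Q_m(q) = q^{m+1}(Q_{-2-m}(q) + 1)`. -/
theorem stmt1 (q : ℝ) (hq : |q| < 1) (m : ℕ) :
    Q q m = q ^ (m + 1) * (Q q (-2 - m) + 1) := by
  rw [Q, ← (summable_Q_terms hq m).sum_add_tsum_nat_add (m + 1), sum_range_card_rank_ge, Q,
    mul_add, mul_one, ← tsum_mul_left, add_comm]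
  congr 1
  refine tsum_congr fun k => ?_
  rw [← add_assoc k m 1, Nat.card_congr (rankShiftEquiv m k)]
  ring

end Dyson
end

section
/- For L > m, Q_m^L(q) + Q_{1−m}^{L−m}(q) + 1 = qbinom(2L−m, L). -/
namespace Dyson

/-- helper: number of parts ≥ k -/
def Nge (s : Multiset ℕ) (k : ℕ) : ℕ := Multiset.card (s.filter (fun p => k ≤ p))

lemma Nge_anti (s : Multiset ℕ) {k l : ℕ} (h : k ≤ l) : Nge s l ≤ Nge s k :=
  Multiset.card_le_card (Multiset.monotone_filter_right s (fun b hb => h.trans hb))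

lemma Nge_cons (s : Multiset ℕ) (p k : ℕ) :
    Nge (p ::ₘ s) k = (if k ≤ p then 1 else 0) + Nge s k := by
  unfold Nge
  by_cases h : k ≤ p <;> simp [Multiset.filter_cons, h] <;> omega

/-- sup of a nonempty multiset of naturals is a member -/
lemma sup_mem {s : Multiset ℕ} (hs : s ≠ 0) : s.sup ∈ s := by
  induction s using Multiset.induction with
  | empty => simp at hs
  | cons a t ih =>
    rcases eq_or_ne t 0 with rfl | ht
    · simp
    · rw [Multiset.sup_cons]
      rcases le_total a t.sup with h | h
      · rw [sup_eq_right.2 h]; exact Multiset.mem_cons_of_mem (ih ht)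
      · rw [sup_eq_left.2 h]; exact Multiset.mem_cons_self a t

lemma Nge_one (s : Multiset ℕ) (hs : ∀ x ∈ s, 0 < x) : Nge s 1 = Multiset.card s := by
  unfold Nge
  rw [show s.filter (fun p => 1 ≤ p) = s from Multiset.filter_eq_self.2 (fun a ha => hs a ha)]

lemma Nge_le_card (s : Multiset ℕ) (k : ℕ) : Nge s k ≤ Multiset.card s :=
  Multiset.card_le_card (Multiset.filter_le _ s)

lemma Nge_eq_zero_of_sup_lt {s : Multiset ℕ} {k : ℕ} (h : s.sup < k) : Nge s k = 0 := by
  unfold Nge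
  rw [Multiset.card_eq_zero, Multiset.filter_eq_nil]
  intro a ha hka
  exact absurd (Multiset.le_sup ha) (by omega)

lemma Nge_pos_iff {s : Multiset ℕ} {k : ℕ} (hk : 0 < k) : 0 < Nge s k ↔ k ≤ s.sup := by
  constructor
  · intro h
    obtain ⟨a, ha⟩ := Multiset.card_pos_iff_exists_mem.1 h
    exact le_trans (Multiset.of_mem_filter ha) (Multiset.le_sup (Multiset.mem_of_mem_filter ha))
  · intro h
    rcases eq_or_ne s 0 with rfl | hs
    · simp at h; omega
    · refine Multiset.card_pos_iff_exists_mem.2 ⟨s.sup, ?_⟩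
      exact Multiset.mem_filter.2 ⟨sup_mem hs, h⟩

/-- a down-closed finset of naturals: membership iff below card -/
lemma mem_iff_lt_card_of_downclosed (S : Finset ℕ)
    (hS : ∀ ⦃a b : ℕ⦄, a ≤ b → b ∈ S → a ∈ S) (k : ℕ) : k ∈ S ↔ k < S.card := by
  constructor
  · intro hk
    have h1 : Finset.range (k + 1) ⊆ S := by
      intro i hi
      exact hS (by simpa using Nat.lt_succ_iff.1 (Finset.mem_range.1 hi)) hk
    have := Finset.card_le_card h1
    simpa using this
  · intro hk
    by_contra hkS
    have h1 : S ⊆ Finset.range k := by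
      intro b hb
      rw [Finset.mem_range]
      by_contra hbk
      exact hkS (hS (le_of_not_gt hbk) hb)
    have := Finset.card_le_card h1
    simp at this; omega

/-- The conjugate multiset -/
def conjParts (s : Multiset ℕ) : Multiset ℕ :=
  (Multiset.range s.sup).map (fun i => Nge s (i + 1))

lemma card_conjParts (s : Multiset ℕ) : Multiset.card (conjParts s) = s.sup := by
  simp [conjParts]

lemma conjParts_pos {s : Multiset ℕ} {x : ℕ} (hx : x ∈ conjParts s) : 0 < x := by
  obtain ⟨i, hi, rfl⟩ := Multiset.mem_map.1 hx
  rw [Multiset.mem_range] at hi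
  exact (Nge_pos_iff (Nat.succ_pos i)).2 hi

lemma sum_conjParts (s : Multiset ℕ) : (conjParts s).sum = s.sum := by
  have key : ∀ K : ℕ, ∑ i ∈ Finset.range K, Nge s (i + 1) = (s.map (fun p => min p K)).sum := by
    intro K
    induction s using Multiset.induction with
    | empty => simp [Nge]
    | cons a t ih =>
      simp only [Nge_cons, Finset.sum_add_distrib, ih, Multiset.map_cons, Multiset.sum_cons]
      congr 1
      rw [Finset.sum_boole]
      have : Finset.filter (fun i => i + 1 ≤ a) (Finset.range K) = Finset.range (min a K) := by
        ext i; simp [Finset.mem_filter, Nat.lt_min]; omega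
      rw [this, Finset.card_range, Nat.min_comm]; simp
  have h2 : (conjParts s).sum = ∑ i ∈ Finset.range s.sup, Nge s (i + 1) := rfl
  rw [h2, key s.sup]
  congr 1
  calc Multiset.map (fun p => p ⊓ s.sup) s = Multiset.map id s := by
        apply Multiset.map_congr rfl
        intro x hx
        exact min_eq_left (Multiset.le_sup hx)
    _ = s := Multiset.map_id s

lemma Nge_conjParts_eq_card (s : Multiset ℕ) (j : ℕ) :
    Nge (conjParts s) j =
      ((Finset.range s.sup).filter (fun i => j ≤ Nge s (i + 1))).card := by
  unfold Nge conjParts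
  rw [Multiset.filter_map, Multiset.card_map]
  rfl

/-- Galois correspondence for conjugation -/
lemma key_galois (s : Multiset ℕ) {j : ℕ} (hj : 0 < j) (k : ℕ) :
    k + 1 ≤ Nge (conjParts s) j ↔ j ≤ Nge s (k + 1) := by
  rw [Nge_conjParts_eq_card]
  set S := (Finset.range s.sup).filter (fun i => j ≤ Nge s (i + 1)) with hS
  have hdc : ∀ ⦃a b : ℕ⦄, a ≤ b → b ∈ S → a ∈ S := by
    intro a b hab hb
    rw [hS, Finset.mem_filter, Finset.mem_range] at hb ⊢
    exact ⟨lt_of_le_of_lt hab hb.1, le_trans hb.2 (Nge_anti s (by omega))⟩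
  have := mem_iff_lt_card_of_downclosed S hdc k
  rw [hS, Finset.mem_filter, Finset.mem_range] at this
  rw [← Nat.lt_iff_add_one_le, ← this]
  constructor
  · exact fun h => h.2
  · intro h
    refine ⟨?_, h⟩
    have : 0 < Nge s (k + 1) := lt_of_lt_of_le hj h
    have := (Nge_pos_iff (Nat.succ_pos k)).1 this
    omega

lemma Nge_determines {s t : Multiset ℕ} (hs : ∀ x ∈ s, 0 < x) (ht : ∀ x ∈ t, 0 < x)
    (h : ∀ k, 0 < k → Nge s k = Nge t k) : s = t := by
  have count_eq : ∀ (u : Multiset ℕ), (∀ x ∈ u, 0 < x) → ∀ v : ℕ, 0 < v →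
      Multiset.count v u + Nge u (v + 1) = Nge u v := by
    intro u hu v hv
    unfold Nge
    rw [Multiset.count_eq_card_filter_eq]
    rw [← Multiset.card_add, Multiset.filter_add_filter]
    have h1 : Multiset.filter (fun a => v = a ∨ v + 1 ≤ a) u = Multiset.filter (fun p => v ≤ p) u := by
      apply Multiset.filter_congr
      intro x hx
      constructor
      · rintro (rfl | h2) <;> omega
      · intro h2; omega
    have h2 : Multiset.filter (fun a => v = a ∧ v + 1 ≤ a) u = 0 := by
      rw [Multiset.filter_eq_nil]
      rintro a ha ⟨rfl, h3⟩; omega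
    rw [h1, h2, Multiset.card_add]
    simp
  ext v
  rcases Nat.eq_zero_or_pos v with rfl | hv
  · rw [Multiset.count_eq_zero_of_notMem, Multiset.count_eq_zero_of_notMem]
    · intro hvt; exact absurd (ht 0 hvt) (by omega)
    · intro hvs; exact absurd (hs 0 hvs) (by omega)
  · have e1 := count_eq s hs v hv
    have e2 := count_eq t ht v hv
    rw [h v hv, h (v+1) (by omega)] at e1
    omega

lemma Nge_conjParts_conjParts (s : Multiset ℕ) {k : ℕ} (hk : 0 < k) :
    Nge (conjParts (conjParts s)) k = Nge s k := by
  have hiff : ∀ l : ℕ, 0 < l → (l ≤ Nge (conjParts (conjParts s)) k ↔ l ≤ Nge s k) := by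
    intro l hl
    obtain ⟨l', rfl⟩ := Nat.exists_eq_succ_of_ne_zero hl.ne'
    rw [key_galois (conjParts s) hk l']
    obtain ⟨k', rfl⟩ := Nat.exists_eq_succ_of_ne_zero hk.ne'
    exact key_galois s (Nat.succ_pos l') k'
  apply le_antisymm
  · rcases Nat.eq_zero_or_pos (Nge (conjParts (conjParts s)) k) with h0 | h0
    · omega
    · exact (hiff _ h0).1 le_rfl
  · rcases Nat.eq_zero_or_pos (Nge s k) with h0 | h0
    · omega
    · exact (hiff _ h0).2 le_rfl

lemma conjParts_conjParts {s : Multiset ℕ} (hs : ∀ x ∈ s, 0 < x) :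
    conjParts (conjParts s) = s :=
  Nge_determines (fun _ hx => conjParts_pos hx) hs
    (fun k hk => Nge_conjParts_conjParts s hk)

lemma sup_conjParts {s : Multiset ℕ} (hs : ∀ x ∈ s, 0 < x) :
    (conjParts s).sup = Multiset.card s := by
  rcases eq_or_ne s 0 with rfl | hne
  · simp [conjParts]
  · apply le_antisymm
    · apply Multiset.sup_le.2
      intro b hb
      obtain ⟨i, _, rfl⟩ := Multiset.mem_map.1 hb
      exact Nge_le_card s (i + 1)
    · have h0 : 0 < s.sup := by
        obtain ⟨a, ha⟩ := Multiset.exists_mem_of_ne_zero hne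
        exact lt_of_lt_of_le (hs a ha) (Multiset.le_sup ha)
      have : Nge s 1 ∈ conjParts s := by
        apply Multiset.mem_map.2
        exact ⟨0, Multiset.mem_range.2 h0, rfl⟩
      rw [Nge_one s hs] at this
      exact Multiset.le_sup this


/-! ### Partition conjugation -/

def pconj {n : ℕ} (π : n.Partition) : n.Partition where
  parts := conjParts π.parts
  parts_pos := fun hi => conjParts_pos hi
  parts_sum := by rw [sum_conjParts, π.parts_sum]

lemma pconj_pconj {n : ℕ} (π : n.Partition) : pconj (pconj π) = π :=
  Nat.Partition.ext (conjParts_conjParts fun _ hx => π.parts_pos hx)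

lemma sup_pconj {n : ℕ} (π : n.Partition) :
    (pconj π).parts.sup = Multiset.card π.parts :=
  sup_conjParts fun _ hx => π.parts_pos hx

lemma card_pconj {n : ℕ} (π : n.Partition) :
    Multiset.card (pconj π).parts = π.parts.sup := card_conjParts π.parts

lemma rank_pconj {n : ℕ} (π : n.Partition) : rank (pconj π) = - rank π := by
  unfold rank
  rw [sup_pconj, card_pconj]
  ring

/-! ### Counting partitions in a box -/

/-- The number of partitions of `n` with all parts `≤ a` and at most `b` parts. -/
noncomputable def Pc (a b n : ℕ) : ℕ :=
  Nat.card {π : n.Partition // π.parts.sup ≤ a ∧ Multiset.card π.parts ≤ b}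

lemma card_split {α : Type*} [Fintype α] (p q : α → Prop) [DecidablePred p] [DecidablePred q] :
    Nat.card {x // p x} = Nat.card {x // p x ∧ q x} + Nat.card {x // p x ∧ ¬ q x} := by
  simp only [Nat.card_eq_fintype_card, Fintype.card_subtype]
  rw [show (Finset.filter (fun x => p x ∧ q x) Finset.univ)
      = (Finset.filter (fun x => p x) Finset.univ).filter q by
    rw [Finset.filter_filter],
    show (Finset.filter (fun x => p x ∧ ¬ q x) Finset.univ)
      = (Finset.filter (fun x => p x) Finset.univ).filter (fun x => ¬ q x) by
    rw [Finset.filter_filter]]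
  exact (Finset.card_filter_add_card_filter_not q).symm

lemma Pc_zero_right (a n : ℕ) : Pc a 0 n = if n = 0 then 1 else 0 := by
  unfold Pc
  rcases eq_or_ne n 0 with rfl | hn
  · rw [if_pos rfl]
    rw [Nat.card_eq_one_iff_unique]
    constructor
    · constructor
      rintro ⟨π, hπ⟩ ⟨σ, hσ⟩
      simp [Subtype.ext_iff, Subsingleton.elim π σ]
    · exact ⟨⟨default, by simp⟩⟩
  · rw [if_neg hn, Nat.card_eq_zero]
    left
    constructor
    rintro ⟨π, _, h2⟩
    have : π.parts = 0 := Multiset.card_eq_zero.1 (Nat.le_zero.1 h2)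
    exact hn (by rw [← π.parts_sum, this, Multiset.sum_zero])

lemma Pc_zero_left (b n : ℕ) : Pc 0 b n = if n = 0 then 1 else 0 := by
  unfold Pc
  rcases eq_or_ne n 0 with rfl | hn
  · rw [if_pos rfl]
    rw [Nat.card_eq_one_iff_unique]
    constructor
    · constructor
      rintro ⟨π, hπ⟩ ⟨σ, hσ⟩
      simp [Subtype.ext_iff, Subsingleton.elim π σ]
    · exact ⟨⟨default, by simp⟩⟩
  · rw [if_neg hn, Nat.card_eq_zero]
    left
    constructor
    rintro ⟨π, h1, _⟩
    have : π.parts = 0 := by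
      rw [Multiset.eq_zero_iff_forall_notMem]
      intro x hx
      have := π.parts_pos hx
      have := le_trans (Multiset.le_sup hx) h1
      omega
    exact hn (by rw [← π.parts_sum, this, Multiset.sum_zero])

lemma Pc_eq_zero_of_lt {a b n : ℕ} (h : a * b < n) : Pc a b n = 0 := by
  unfold Pc
  rw [Nat.card_eq_zero]
  left
  constructor
  rintro ⟨π, h1, h2⟩
  have hsum : π.parts.sum ≤ Multiset.card π.parts * π.parts.sup := by
    simpa using Multiset.sum_le_card_nsmul π.parts π.parts.sup (fun x hx => Multiset.le_sup hx)
  rw [π.parts_sum] at hsum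
  have : Multiset.card π.parts * π.parts.sup ≤ b * a :=
    Nat.mul_le_mul h2 h1
  nlinarith

/-- erase/cons equivalence for the recurrence -/
def eraseEquiv (a b n : ℕ) (hn : a + 1 ≤ n) :
    {π : n.Partition // ((π.parts.sup ≤ a + 1 ∧ Multiset.card π.parts ≤ b + 1) ∧ (a+1) ∈ π.parts)}
      ≃ {σ : (n - (a+1)).Partition // σ.parts.sup ≤ a + 1 ∧ Multiset.card σ.parts ≤ b} where
  toFun := fun ⟨π, ⟨⟨h1, h2⟩, h3⟩⟩ =>
    ⟨⟨π.parts.erase (a+1),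
      fun hi => π.parts_pos (Multiset.mem_of_mem_erase hi),
      by
        have := Multiset.sum_erase h3
        have hs := π.parts_sum
        omega⟩,
      by
        constructor
        · exact Multiset.sup_le.2 fun x hx =>
            le_trans (Multiset.le_sup (Multiset.mem_of_mem_erase hx)) h1
        · have hc : 0 < Multiset.card π.parts := Multiset.card_pos_iff_exists_mem.2 ⟨_, h3⟩
          rw [Multiset.card_erase_of_mem h3, Nat.pred_eq_sub_one]
          omega⟩
  invFun := fun ⟨σ, ⟨h1, h2⟩⟩ =>
    ⟨⟨(a+1) ::ₘ σ.parts,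
      fun hi => by
        rcases Multiset.mem_cons.1 hi with rfl | hi
        · omega
        · exact σ.parts_pos hi,
      by rw [Multiset.sum_cons, σ.parts_sum]; omega⟩,
      by
        refine ⟨⟨?_, ?_⟩, Multiset.mem_cons_self _ _⟩
        · rw [Multiset.sup_cons]
          exact sup_le le_rfl h1
        · rw [Multiset.card_cons]
          omega⟩
  left_inv := by
    rintro ⟨π, ⟨⟨h1, h2⟩, h3⟩⟩
    apply Subtype.ext
    apply Nat.Partition.ext
    exact Multiset.cons_erase h3
  right_inv := by
    rintro ⟨σ, ⟨h1, h2⟩⟩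
    apply Subtype.ext
    apply Nat.Partition.ext
    exact Multiset.erase_cons_head _ _

lemma Pc_rec (a b n : ℕ) :
    Pc (a+1) (b+1) n = Pc a (b+1) n + (if a+1 ≤ n then Pc (a+1) b (n - (a+1)) else 0) := by
  unfold Pc
  rw [card_split (fun π : n.Partition =>
        π.parts.sup ≤ a + 1 ∧ Multiset.card π.parts ≤ b + 1) (fun π => (a+1) ∈ π.parts)]
  have hA : Nat.card {π : n.Partition //
      (π.parts.sup ≤ a + 1 ∧ Multiset.card π.parts ≤ b + 1) ∧ (a+1) ∈ π.parts}
      = (if a+1 ≤ n then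
          Nat.card {σ : (n - (a+1)).Partition // σ.parts.sup ≤ a + 1 ∧ Multiset.card σ.parts ≤ b}
        else 0) := by
    by_cases hn : a + 1 ≤ n
    · rw [if_pos hn]
      exact Nat.card_congr (eraseEquiv a b n hn)
    · rw [if_neg hn, Nat.card_eq_zero]
      left
      constructor
      rintro ⟨π, ⟨_, h3⟩⟩
      have := Multiset.le_sum_of_mem h3
      rw [π.parts_sum] at this
      omega
  have hB : Nat.card {π : n.Partition //
      (π.parts.sup ≤ a + 1 ∧ Multiset.card π.parts ≤ b + 1) ∧ ¬ (a+1) ∈ π.parts}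
      = Nat.card {π : n.Partition // π.parts.sup ≤ a ∧ Multiset.card π.parts ≤ b + 1} := by
    apply Nat.card_congr
    apply Equiv.subtypeEquivRight
    intro π
    constructor
    · rintro ⟨⟨h1, h2⟩, h3⟩
      refine ⟨?_, h2⟩
      rcases eq_or_ne π.parts 0 with he | hne
      · rw [he]; simp
      · have hmem := sup_mem hne
        have : π.parts.sup ≠ a + 1 := fun hcon => h3 (hcon ▸ hmem)
        omega
    · rintro ⟨h1, h2⟩
      refine ⟨⟨by omega, h2⟩, fun hmem => ?_⟩
      have := Multiset.le_sup hmem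
      omega
  rw [hA, hB, add_comm]

/-! ### Generating function -/

noncomputable def Fgen (q : ℝ) (a b : ℕ) : ℝ := ∑' n, (Pc a b n : ℝ) * q ^ n

lemma Fgen_eq_sum (q : ℝ) (a b N : ℕ) (hN : a * b < N) :
    Fgen q a b = ∑ n ∈ Finset.range N, (Pc a b n : ℝ) * q ^ n := by
  apply tsum_eq_sum
  intro n hn
  rw [Finset.mem_range, not_lt] at hn
  rw [Pc_eq_zero_of_lt (by omega)]
  simp

lemma qPoch_succ (q : ℝ) (n : ℕ) : qPoch q (n + 1) = qPoch q n * (1 - q ^ (n + 1)) :=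
  Finset.prod_range_succ _ n

lemma qPoch_pos {q : ℝ} (hq : |q| < 1) (n : ℕ) : 0 < qPoch q n := by
  apply Finset.prod_pos
  intro j _
  have h1 : |q ^ (j + 1)| < 1 := by
    rw [abs_pow]
    exact pow_lt_one₀ (abs_nonneg q) hq (by omega)
  have := abs_lt.1 h1
  linarith [this.2]

lemma Fgen_zero_right (q : ℝ) (a : ℕ) : Fgen q a 0 = 1 := by
  rw [Fgen_eq_sum q a 0 1 (by omega)]
  simp [Pc_zero_right]

lemma Fgen_zero_left (q : ℝ) (b : ℕ) : Fgen q 0 b = 1 := by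
  rw [Fgen_eq_sum q 0 b 1 (by omega)]
  simp [Pc_zero_left]

lemma Fgen_rec (q : ℝ) (a b : ℕ) :
    Fgen q (a+1) (b+1) = Fgen q a (b+1) + q^(a+1) * Fgen q (a+1) b := by
  set N := (a+1) * (b+1) + 1 with hN
  rw [Fgen_eq_sum q (a+1) (b+1) ((a+1) + N) (by omega),
      Fgen_eq_sum q a (b+1) ((a+1) + N) (by nlinarith),
      Fgen_eq_sum q (a+1) b N (by nlinarith)]
  have hterm : ∀ n : ℕ, (Pc (a+1) (b+1) n : ℝ) * q ^ n
      = (Pc a (b+1) n : ℝ) * q ^ n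
        + (if a+1 ≤ n then (Pc (a+1) b (n - (a+1)) : ℝ) else 0) * q ^ n := by
    intro n
    rw [Pc_rec]
    by_cases h : a + 1 ≤ n <;> simp only [if_pos, if_neg, h, if_true, if_false] <;> push_cast <;>
      ring
  rw [Finset.sum_congr rfl (fun n _ => hterm n), Finset.sum_add_distrib]
  congr 1
  rw [Finset.sum_range_add]
  have h0 : ∑ i ∈ Finset.range (a+1),
      (if a+1 ≤ i then (Pc (a+1) b (i - (a+1)) : ℝ) else 0) * q ^ i = 0 := by
    apply Finset.sum_eq_zero
    intro i hi
    rw [Finset.mem_range] at hi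
    rw [if_neg (by omega)]
    ring
  rw [h0, zero_add, Finset.mul_sum]
  apply Finset.sum_congr rfl
  intro i _
  rw [if_pos (by omega), show a + 1 + i - (a + 1) = i by omega, pow_add]
  ring

lemma Fgen_mul (q : ℝ) : ∀ (N a b : ℕ), a + b ≤ N →
    Fgen q a b * (qPoch q a * qPoch q b) = qPoch q (a + b) := by
  intro N
  induction N with
  | zero =>
    intro a b hab
    have ha : a = 0 := by omega
    have hb : b = 0 := by omega
    subst ha; subst hb
    simp [Fgen_zero_left, qPoch]
  | succ N ih =>
    intro a b hab
    match a, b with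
    | 0, b => simp [Fgen_zero_left, qPoch]
    | (a+1), 0 => simp [Fgen_zero_right, qPoch]
    | (a+1), (b+1) =>
      have ih1 := ih a (b+1) (by omega)
      have ih2 := ih (a+1) b (by omega)
      rw [Fgen_rec]
      rw [show a + 1 + (b + 1) = (a + (b+1)) + 1 by omega, qPoch_succ q (a + (b+1))]
      rw [show a + (b+1) = (a+1) + b by omega] at ih1
      rw [qPoch_succ q a, qPoch_succ q b]
      rw [qPoch_succ q a] at ih2
      rw [qPoch_succ q b] at ih1
      rw [show a + 1 + b = a + (b + 1) by omega] at ih1 ih2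
      linear_combination (1 - q^(a+1)) * ih1 + q^(a+1) * (1 - q^(b+1)) * ih2

lemma Pc_at_zero (a b : ℕ) : Pc a b 0 = 1 := by
  unfold Pc
  rw [Nat.card_eq_one_iff_unique]
  constructor
  · constructor
    rintro ⟨π, hπ⟩ ⟨σ, hσ⟩
    simp [Subtype.ext_iff, Subsingleton.elim π σ]
  · exact ⟨⟨default, by simp⟩⟩

/-- The conjugation equivalence between low-rank box partitions and the second rank set. -/
def conjEquiv (m : ℤ) (L : ℕ) (b : ℕ) (hb : (b : ℤ) = (L : ℤ) - m) (n : ℕ) :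
    {π : n.Partition // (π.parts.sup ≤ L ∧ Multiset.card π.parts ≤ b) ∧ ¬ (m ≤ rank π)}
      ≃ {π : n.Partition // 1 - m ≤ rank π ∧ (π.parts.sup : ℤ) ≤ (L : ℤ) - m} where
  toFun := fun ⟨π, ⟨⟨h1, h2⟩, h3⟩⟩ =>
    ⟨pconj π, by
      rw [not_le] at h3
      constructor
      · rw [rank_pconj]; omega
      · rw [sup_pconj]; omega⟩
  invFun := fun ⟨σ, ⟨h1, h2⟩⟩ =>
    ⟨pconj σ, by
      unfold rank at h1
      refine ⟨⟨?_, ?_⟩, ?_⟩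
      · rw [sup_pconj]; omega
      · rw [card_pconj]; omega
      · rw [not_le, rank_pconj]
        unfold rank
        omega⟩
  left_inv := by
    rintro ⟨π, ⟨⟨h1, h2⟩, h3⟩⟩
    apply Subtype.ext
    show pconj (pconj π) = π
    exact pconj_pconj π
  right_inv := by
    rintro ⟨σ, ⟨h1, h2⟩⟩
    apply Subtype.ext
    show pconj (pconj σ) = σ
    exact pconj_pconj σ

lemma Pc_coeff (m : ℤ) (L : ℕ) (b : ℕ) (hb : (b : ℤ) = (L : ℤ) - m) (n : ℕ) :
    (Pc L b n : ℕ)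
      = Nat.card {π : n.Partition // m ≤ rank π ∧ (π.parts.sup : ℤ) ≤ (L : ℤ)}
        + Nat.card {π : n.Partition // 1 - m ≤ rank π ∧ (π.parts.sup : ℤ) ≤ (L : ℤ) - m} := by
  unfold Pc
  rw [card_split (fun π : n.Partition => π.parts.sup ≤ L ∧ Multiset.card π.parts ≤ b)
    (fun π => m ≤ rank π)]
  congr 1
  · apply Nat.card_congr
    apply Equiv.subtypeEquivRight
    intro π
    unfold rank
    constructor
    · rintro ⟨⟨h1, _⟩, h3⟩
      exact ⟨h3, by omega⟩
    · rintro ⟨h1, h2⟩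
      refine ⟨⟨by omega, by omega⟩, h1⟩
  · exact Nat.card_congr (conjEquiv m L b hb n)

/-- for L > m,
`Q_m^L(q) + Q_{1-m}^{L-m}(q) + 1 = qbinom(2L-m, L)`. -/
theorem stmt7 (q : ℝ) (hq : |q| < 1) (m : ℤ) (L : ℕ) (h : m < L) :
    QL q m L + QL q (1 - m) (L - m) + 1 = qbinom q (2 * L - m) L := by
  have hLm : (0:ℤ) ≤ (L:ℤ) - m := by omega
  set b : ℕ := ((L:ℤ) - m).toNat with hbdef
  have hb : (b : ℤ) = (L:ℤ) - m := Int.toNat_of_nonneg hLm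
  -- rewrite the right-hand side as Fgen q L b
  have hcond : (0:ℤ) ≤ (L:ℤ) ∧ (L:ℤ) ≤ 2 * L - m := ⟨by omega, by omega⟩
  have h1 : (2 * (L:ℤ) - m).toNat = L + b := by omega
  have h2 : ((L:ℤ)).toNat = L := by omega
  have h3 : (2 * (L:ℤ) - m - L).toNat = b := by omega
  rw [qbinom, if_pos hcond, h1, h2, h3]
  have hF := Fgen_mul q (L + b) L b le_rfl
  have hne : qPoch q L * qPoch q b ≠ 0 := ne_of_gt (mul_pos (qPoch_pos hq L) (qPoch_pos hq b))
  rw [← hF, mul_div_assoc, div_self hne, mul_one]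
  -- now compute Fgen q L b
  set A : ℕ → ℕ := fun n =>
    Nat.card {π : (n+1).Partition // m ≤ rank π ∧ (π.parts.sup : ℤ) ≤ (L:ℤ)} with hAdef
  set B : ℕ → ℕ := fun n =>
    Nat.card {π : (n+1).Partition // 1 - m ≤ rank π ∧ (π.parts.sup : ℤ) ≤ (L:ℤ) - m} with hBdef
  have hcoeff : ∀ n : ℕ, Pc L b (n+1) = A n + B n := fun n => Pc_coeff m L b hb (n+1)
  have hzero : ∀ n : ℕ, L * b ≤ n → Pc L b (n+1) = 0 :=
    fun n hn => Pc_eq_zero_of_lt (by omega)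
  have hA0 : ∀ n : ℕ, L * b ≤ n → A n = 0 := by
    intro n hn
    have := hcoeff n
    rw [hzero n hn] at this
    omega
  have hB0 : ∀ n : ℕ, L * b ≤ n → B n = 0 := by
    intro n hn
    have := hcoeff n
    rw [hzero n hn] at this
    omega
  have hsum : Summable (fun n : ℕ => (Pc L b n : ℝ) * q ^ n) := by
    apply summable_of_ne_finset_zero (s := Finset.range (L*b+1))
    intro n hn
    rw [Finset.mem_range, not_lt] at hn
    rw [Pc_eq_zero_of_lt (by omega)]
    simp
  have hsumA : Summable (fun n : ℕ => (A n : ℝ) * q ^ (n+1)) := by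
    apply summable_of_ne_finset_zero (s := Finset.range (L*b+1))
    intro n hn
    rw [Finset.mem_range, not_lt] at hn
    rw [hA0 n (by omega)]
    simp
  have hsumB : Summable (fun n : ℕ => (B n : ℝ) * q ^ (n+1)) := by
    apply summable_of_ne_finset_zero (s := Finset.range (L*b+1))
    intro n hn
    rw [Finset.mem_range, not_lt] at hn
    rw [hB0 n (by omega)]
    simp
  have hFg : Fgen q L b
      = 1 + ((∑' n : ℕ, (A n : ℝ) * q ^ (n+1)) + (∑' n : ℕ, (B n : ℝ) * q ^ (n+1))) := by
    rw [Fgen, Summable.tsum_eq_zero_add hsum, Pc_at_zero]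
    congr 1
    · simp
    · rw [← Summable.tsum_add hsumA hsumB]
      apply tsum_congr
      intro n
      rw [hcoeff n]
      push_cast
      ring
  rw [hFg]
  have eA : QL q m L = ∑' n : ℕ, (A n : ℝ) * q ^ (n+1) := rfl
  have eB : QL q (1-m) ((L:ℤ)-m) = ∑' n : ℕ, (B n : ℝ) * q ^ (n+1) := rfl
  rw [eA, eB]
  ring

end Dyson
end
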